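/- arXiv:1807.11664 — 3 statements merged into one kernel-verified Lean document; each statement's English description precedes it below -/
import Mathlib

section
/- Let V be a finite-dimensional real inner product space, G a subgroup of the orthogonal group O(V), and v_0 ∈ V a unit vector. Assume that G acts transitively on the unit sphere of V and that the stabilizer of v_0 in G acts transitively on the unit sphere of the orthogonal complement (ℝv_0)^⊥, and let w_0 ∈ (ℝv_0)^⊥ be a unit vector. Then for every pair (x, y) ∈ V × V (representing the element x + iy of the complexification V_ℂ = V + iV, on which G acts diagonally) there exist g ∈ G and real numbers a, b, c such that x = g(a·v_0) and y = g(b·v_0 + c·w_0); that is, V_ℂ = G·(ℝv_0 + i(ℝv_0 ⊕ ℝw_0)). -/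
/-- **Lemma 5.2 of [imrn-irreducible]** (Lemma `lem:vc` of the paper).
Let `V` be a finite-dimensional real inner product space, `G` a subgroup of the orthogonal
group of `V` (realized as the group of linear isometric self-equivalences of `V`),
and `v₀` a unit vector.  If `G` acts transitively on the unit sphere of `V` and the
stabilizer of `v₀` in `G` acts transitively on the unit sphere of `(ℝv₀)ᗮ`, then for any
unit vector `w₀ ∈ (ℝv₀)ᗮ`, every element `x + i y` of the complexification `V_ℂ = V + iV`
(on which `G` acts diagonally) lies in `G · (ℝv₀ + i(ℝv₀ ⊕ ℝw₀))`. -/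
theorem stmt0 {V : Type*} [NormedAddCommGroup V] [InnerProductSpace ℝ V]
    [FiniteDimensional ℝ V]
    (G : Subgroup (V ≃ₗᵢ[ℝ] V)) (v₀ : V) (hv₀ : ‖v₀‖ = 1)
    (htrans : ∀ v : V, ‖v‖ = 1 → ∃ g ∈ G, g v₀ = v)
    (hstab : ∀ w ∈ (Submodule.span ℝ {v₀})ᗮ, ‖w‖ = 1 →
      ∀ w' ∈ (Submodule.span ℝ {v₀})ᗮ, ‖w'‖ = 1 →
      ∃ g ∈ G, g v₀ = v₀ ∧ g w = w')
    (w₀ : V) (hw₀ : w₀ ∈ (Submodule.span ℝ {v₀})ᗮ) (hw₀n : ‖w₀‖ = 1) :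
    ∀ x y : V, ∃ g ∈ G, ∃ a b c : ℝ,
      x = g (a • v₀) ∧ y = g (b • v₀ + c • w₀) := by
  intro x y
  by_cases hx : x = 0
  · by_cases hy : y = 0
    · exact ⟨1, one_mem G, 0, 0, 0, by simp [hx], by simp [hy]⟩
    · obtain ⟨g, hg, hgv⟩ := htrans (‖y‖⁻¹ • y)
        (by rw [norm_smul, norm_inv, norm_norm]
            exact inv_mul_cancel₀ (norm_ne_zero_iff.2 hy))
      refine ⟨g, hg, 0, ‖y‖, 0, by simp [hx], ?_⟩
      rw [zero_smul, add_zero, map_smul, hgv, smul_inv_smul₀ (norm_ne_zero_iff.2 hy)]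
  · obtain ⟨g₁, hg₁, hg₁v⟩ := htrans (‖x‖⁻¹ • x)
      (by rw [norm_smul, norm_inv, norm_norm]
          exact inv_mul_cancel₀ (norm_ne_zero_iff.2 hx))
    set y' := g₁.symm y with hy'
    set b := inner (𝕜 := ℝ) v₀ y' with hb
    set w := y' - b • v₀ with hwdef
    have hxeq : x = g₁ (‖x‖ • v₀) := by
      rw [map_smul, hg₁v, smul_inv_smul₀ (norm_ne_zero_iff.2 hx)]
    have hyw : y = g₁ (b • v₀ + w) := by
      rw [hwdef]
      simp [hy']
    have key : inner (𝕜 := ℝ) v₀ w = 0 := by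
      rw [hwdef, inner_sub_right, real_inner_smul_right, real_inner_self_eq_norm_sq,
        hv₀, ← hb]
      ring
    have hwmem : w ∈ (Submodule.span ℝ {v₀})ᗮ := by
      rw [Submodule.mem_orthogonal]
      intro u hu
      obtain ⟨r, rfl⟩ := Submodule.mem_span_singleton.mp hu
      rw [real_inner_smul_left, key, mul_zero]
    by_cases hw0 : w = 0
    · refine ⟨g₁, hg₁, ‖x‖, b, 0, hxeq, ?_⟩
      rw [hyw, hw0, add_zero, zero_smul, add_zero]
    · obtain ⟨h, hhG, hhv, hhw⟩ := hstab w₀ hw₀ hw₀n (‖w‖⁻¹ • w)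
        (Submodule.smul_mem _ _ hwmem)
        (by rw [norm_smul, norm_inv, norm_norm]
            exact inv_mul_cancel₀ (norm_ne_zero_iff.2 hw0))
      refine ⟨g₁ * h, mul_mem hg₁ hhG, ‖x‖, b, ‖w‖, ?_, ?_⟩
      · symm
        calc (g₁ * h) (‖x‖ • v₀) = g₁ (h (‖x‖ • v₀)) := rfl
          _ = g₁ (‖x‖ • v₀) := by rw [map_smul, hhv]
          _ = x := hxeq.symm
      · symm
        calc (g₁ * h) (b • v₀ + ‖w‖ • w₀) = g₁ (h (b • v₀ + ‖w‖ • w₀)) := rfl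
          _ = g₁ (b • v₀ + w) := by
              rw [map_add, map_smul, map_smul, hhv, hhw,
                smul_inv_smul₀ (norm_ne_zero_iff.2 hw0)]
          _ = y := hyw.symm
end

section
/- The generator τ_1 of the one-parameter group A_1 is orthogonal to the realization of 𝔰𝔩(3,ℂ) inside 𝔤_2(ℂ): for every derivation X of 𝕆_ℂ with X e_1 = 0, one has Tr(τ_1 X) = 0. (Since the trace form of the 8-dimensional representation is a nonzero multiple of the Killing form on the simple Lie algebra 𝔤_2(ℂ), this says that the Lie algebra 𝔞_1 = ℝτ_1 lies in the Killing-orthogonal complement 𝔮 of 𝔰𝔩(3,ℂ) in 𝔤_2(ℂ).) -/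
open Matrix

noncomputable section

/-- The standard basis of the complexified Cayley algebra `𝕆_ℂ = ℂ^8`. -/
def e (i : Fin 8) : Fin 8 → ℂ := Pi.single i 1

/-- The oriented lines of the multiplication table of the Cayley algebra:
`(i, j, k)` in this list means `e_i e_j = e_k`. -/
def octLines : List (Fin 8 × Fin 8 × Fin 8) :=
  [(1,2,3),(2,3,1),(3,1,2),
   (1,4,5),(4,5,1),(5,1,4),
   (1,6,7),(6,7,1),(7,1,6),
   (2,5,7),(5,7,2),(7,2,5),
   (2,6,4),(6,4,2),(4,2,6),
   (3,5,6),(5,6,3),(6,3,5),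
   (3,4,7),(4,7,3),(7,3,4)]

/-- Product of two basis elements of the complexified Cayley algebra. -/
def octBasisMul (i j : Fin 8) : Fin 8 → ℂ :=
  if i = 0 then e j
  else if j = 0 then e i
  else if i = j then -(e 0)
  else
    match octLines.find? (fun t => t.1 == i && t.2.1 == j) with
    | some t => e t.2.2
    | none =>
      match octLines.find? (fun t => t.1 == j && t.2.1 == i) with
      | some t => -(e t.2.2)
      | none => 0

/-- The bilinear multiplication of the complexified Cayley algebra `𝕆_ℂ`. -/
def octMul (x y : Fin 8 → ℂ) : Fin 8 → ℂ :=
  ∑ i, ∑ j, (x i * y j) • octBasisMul i j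

/-- The standard symmetric bilinear form on `ℂ^8`. -/
def bform (v w : Fin 8 → ℂ) : ℂ := ∑ i, v i * w i

/-- `SO(8, ℂ)`. -/
def SO8 (g : Matrix (Fin 8) (Fin 8) ℂ) : Prop := gᵀ * g = 1 ∧ g.det = 1

/-- A matrix has real entries. -/
def realMat (g : Matrix (Fin 8) (Fin 8) ℂ) : Prop := ∀ i j, (g i j).im = 0

/-- The realization of `G₂(ℂ)` as automorphisms of `𝕆_ℂ`. -/
def inG2 (g : Matrix (Fin 8) (Fin 8) ℂ) : Prop :=
  SO8 g ∧ ∀ x y, g.mulVec (octMul x y) = octMul (g.mulVec x) (g.mulVec y)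

/-- The compact real form `G₂`. -/
def inG2cpt (g : Matrix (Fin 8) (Fin 8) ℂ) : Prop := inG2 g ∧ realMat g

/-- The realization `B₃(ℂ)` of `Spin(7, ℂ)`. -/
def inB3 (g : Matrix (Fin 8) (Fin 8) ℂ) : Prop :=
  SO8 g ∧ ∃ g₀, SO8 g₀ ∧ g₀.mulVec (e 0) = e 0 ∧
    ∀ x y, octMul (g₀.mulVec x) (g.mulVec y) = g.mulVec (octMul x y)

/-- The compact real form `Spin(7)`. -/
def inSpin7 (g : Matrix (Fin 8) (Fin 8) ℂ) : Prop :=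
  SO8 g ∧ realMat g ∧ ∃ g₀, SO8 g₀ ∧ realMat g₀ ∧ g₀.mulVec (e 0) = e 0 ∧
    ∀ x y, octMul (g₀.mulVec x) (g.mulVec y) = g.mulVec (octMul x y)

/-- The one-parameter group `t_θ` (abelian slice `A₁` for `(G₂(ℂ), SL(3,ℂ))`). -/
def tmat (θ : ℝ) : Matrix (Fin 8) (Fin 8) ℂ :=
  Matrix.of fun i j =>
    (![ e 0,
        (Real.cosh θ : ℂ) • e 1 + (Complex.I * (Real.sinh θ : ℂ)) • e 2,
        (-(Complex.I * (Real.sinh θ : ℂ))) • e 1 + (Real.cosh θ : ℂ) • e 2,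
        e 3,
        (Real.cosh (θ/2) : ℂ) • e 4 + (-(Complex.I * (Real.sinh (θ/2) : ℂ))) • e 7,
        (Real.cosh (θ/2) : ℂ) • e 5 + (-(Complex.I * (Real.sinh (θ/2) : ℂ))) • e 6,
        (Complex.I * (Real.sinh (θ/2) : ℂ)) • e 5 + (Real.cosh (θ/2) : ℂ) • e 6,
        (Complex.I * (Real.sinh (θ/2) : ℂ)) • e 4 + (Real.cosh (θ/2) : ℂ) • e 7 ] j) i

/-- The generator `τ₁` of the one-parameter group `A₁`, i.e. `exp (θ τ₁) = t_θ`. -/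
def tau1 : Matrix (Fin 8) (Fin 8) ℂ :=
  Matrix.of fun i j =>
    (![ 0,
        Complex.I • e 2,
        (-Complex.I) • e 1,
        0,
        (-(Complex.I/2)) • e 7,
        (-(Complex.I/2)) • e 6,
        (Complex.I/2) • e 5,
        (Complex.I/2) • e 4 ] j) i

/-- The one-parameter group `ã_θ` (abelian slice `Ã₀` for `(Spin(7,ℂ), G₂(ℂ))`). -/
def atil (θ : ℝ) : Matrix (Fin 8) (Fin 8) ℂ :=
  Matrix.of fun i j =>
    (![ (Real.cosh θ : ℂ) • e 0 + (Complex.I * (Real.sinh θ : ℂ)) • e 1,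
        (-(Complex.I * (Real.sinh θ : ℂ))) • e 0 + (Real.cosh θ : ℂ) • e 1,
        (Real.cosh (θ/3) : ℂ) • e 2 + (-(Complex.I * (Real.sinh (θ/3) : ℂ))) • e 3,
        (Complex.I * (Real.sinh (θ/3) : ℂ)) • e 2 + (Real.cosh (θ/3) : ℂ) • e 3,
        (Real.cosh (θ/3) : ℂ) • e 4 + (-(Complex.I * (Real.sinh (θ/3) : ℂ))) • e 5,
        (Complex.I * (Real.sinh (θ/3) : ℂ)) • e 4 + (Real.cosh (θ/3) : ℂ) • e 5,
        (Real.cosh (θ/3) : ℂ) • e 6 + (-(Complex.I * (Real.sinh (θ/3) : ℂ))) • e 7,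
        (Complex.I * (Real.sinh (θ/3) : ℂ)) • e 6 + (Real.cosh (θ/3) : ℂ) • e 7 ] j) i

/-- The generator `α̃₁` of the one-parameter group `Ã₀`, i.e. `exp (θ α̃₁) = ã_θ`. -/
def alphatil1 : Matrix (Fin 8) (Fin 8) ℂ :=
  Matrix.of fun i j =>
    (![ Complex.I • e 1,
        (-Complex.I) • e 0,
        (-(Complex.I/3)) • e 3,
        (Complex.I/3) • e 2,
        (-(Complex.I/3)) • e 5,
        (Complex.I/3) • e 4,
        (-(Complex.I/3)) • e 7,
        (Complex.I/3) • e 6 ] j) i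

/-- The one-parameter group `a_x` (abelian slice `A₀` for `(SO(7,ℂ), G₂(ℂ))`). -/
def amat (x : ℝ) : Matrix (Fin 8) (Fin 8) ℂ :=
  Matrix.of fun i j =>
    (![ e 0,
        e 1,
        (Real.cosh x : ℂ) • e 2 + (Complex.I * (Real.sinh x : ℂ)) • e 3,
        (-(Complex.I * (Real.sinh x : ℂ))) • e 2 + (Real.cosh x : ℂ) • e 3,
        (Real.cosh x : ℂ) • e 4 + (Complex.I * (Real.sinh x : ℂ)) • e 5,
        (-(Complex.I * (Real.sinh x : ℂ))) • e 4 + (Real.cosh x : ℂ) • e 5,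
        (Real.cosh x : ℂ) • e 6 + (Complex.I * (Real.sinh x : ℂ)) • e 7,
        (-(Complex.I * (Real.sinh x : ℂ))) • e 6 + (Real.cosh x : ℂ) • e 7 ] j) i

/-- The matrix `I₊₋ = diag(1, −1, 1, −1, 1, −1, 1, −1)`. -/
def Ipm : Matrix (Fin 8) (Fin 8) ℂ :=
  Matrix.diagonal ![1, -1, 1, -1, 1, -1, 1, -1]

/-- The anti-holomorphic involution `σ₀(g) = I₊₋ ḡ I₊₋`. -/
def sigma0 (g : Matrix (Fin 8) (Fin 8) ℂ) : Matrix (Fin 8) (Fin 8) ℂ :=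
  Ipm * g.map (starRingEnd ℂ) * Ipm

end

/-!
A derivation `X` with `X e₁ = 0` commutes with left and right multiplication by `e₁`, so every
relation `e₁ e_j = e_k` (or `e_j e₁ = e_k`) expresses column `k` of `X` through column `j`.
Reading off single entries gives `X₂₁ = 0`, `X₁₂ = X₀₃ = -X₁₂`, `X₆₅ = -X₇₄` and `X₄₇ = -X₅₆`,
which are exactly the combinations of entries making up `Tr(τ₁ X)`.
-/

lemma mulVec_e (X : Matrix (Fin 8) (Fin 8) ℂ) (j : Fin 8) : X *ᵥ e j = X.col j :=
  mulVec_single_one X j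

def IsOctDerivation (X : Matrix (Fin 8) (Fin 8) ℂ) : Prop :=
  ∀ x y, X *ᵥ octMul x y = octMul (X *ᵥ x) y + octMul x (X *ᵥ y)

lemma octMul_zero_left (y : Fin 8 → ℂ) : octMul 0 y = 0 := by simp [octMul]

lemma octMul_zero_right (x : Fin 8 → ℂ) : octMul x 0 = 0 := by simp [octMul]

lemma octMul_e_e (i j : Fin 8) : octMul (e i) (e j) = octBasisMul i j := by
  simp [octMul, e, Pi.single_apply]

lemma octMul_e_one_left (v : Fin 8 → ℂ) :
    octMul (e 1) v = ![-v 1, v 0, -v 3, v 2, -v 5, v 4, -v 7, v 6] := by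
  ext k
  fin_cases k <;> simp [octMul, octBasisMul, octLines, e, Fin.sum_univ_eight, Pi.single_apply]

lemma octMul_e_one_right (v : Fin 8 → ℂ) :
    octMul v (e 1) = ![-v 1, v 0, v 3, -v 2, v 5, -v 4, v 7, -v 6] := by
  ext k
  fin_cases k <;> simp [octMul, octBasisMul, octLines, e, Fin.sum_univ_eight, Pi.single_apply]

lemma trace_tau1_mul (X : Matrix (Fin 8) (Fin 8) ℂ) :
    trace (tau1 * X) = Complex.I * (X 1 2 - X 2 1)
      + Complex.I / 2 * (X 6 5 + X 7 4 - X 4 7 - X 5 6) := by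
  simp only [trace, tau1, Nat.succ_eq_add_one, Nat.reduceAdd, e, Fin.isValue, neg_smul, cons_val',
    Pi.zero_apply, Pi.smul_apply, Pi.single_apply, smul_eq_mul, mul_ite, mul_one, mul_zero,
    Pi.neg_apply, cons_val_fin_one, diag_apply, Matrix.mul_apply, of_apply, Fin.sum_univ_eight,
    cons_val_zero, zero_mul, cons_val_one, ite_mul, zero_add, cons_val, neg_mul, add_zero,
    Fin.reduceEq, ↓reduceIte, zero_ne_one, neg_zero]
  ring

namespace IsOctDerivation

variable {X : Matrix (Fin 8) (Fin 8) ℂ}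

lemma col_eq_e_one_mul (hX : IsOctDerivation X) (hfix : X *ᵥ e 1 = 0) {j k : Fin 8}
    (hjk : octMul (e 1) (e j) = e k) : X.col k = octMul (e 1) (X.col j) := by
  rw [← mulVec_e, ← mulVec_e, ← hjk, hX, hfix, octMul_zero_left, zero_add]

lemma col_eq_mul_e_one (hX : IsOctDerivation X) (hfix : X *ᵥ e 1 = 0) {j k : Fin 8}
    (hjk : octMul (e j) (e 1) = e k) : X.col k = octMul (X.col j) (e 1) := by
  rw [← mulVec_e, ← mulVec_e, ← hjk, hX, hfix, octMul_zero_right, add_zero]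

end IsOctDerivation

/-- **Lemma `lem:a1-q`.** The generator `τ₁` of the one-parameter group `A₁` is
orthogonal to the realization of `𝔰𝔩(3,ℂ)` inside `𝔤₂(ℂ)`: for every derivation `X`
of `𝕆_ℂ` with `X e₁ = 0`, one has `Tr(τ₁ X) = 0`.  (Since the trace form of the
8-dimensional representation is a nonzero multiple of the Killing form on `𝔤₂(ℂ)`,
this says that `𝔞₁ = ℝ τ₁` lies in the Killing-orthogonal complement `𝔮` of
`𝔰𝔩(3,ℂ)` in `𝔤₂(ℂ)`.) -/
theorem stmt9 (X : Matrix (Fin 8) (Fin 8) ℂ)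
    (hder : ∀ x y, X.mulVec (octMul x y)
      = octMul (X.mulVec x) y + octMul x (X.mulVec y))
    (hfix : X.mulVec (e 1) = 0) :
    Matrix.trace (tau1 * X) = 0 := by
  have hX : IsOctDerivation X := hder
  have h21 : X 2 1 = 0 := congrFun (mulVec_e X 1 ▸ hfix) 2
  -- `octMul_e_e i j` closes `octMul (e i) (e j) = e k` because `octBasisMul i j` reduces to `e k`
  have h03 : X 0 3 = -X 1 2 := by
    simpa [octMul_e_one_left] using congrFun (hX.col_eq_e_one_mul hfix (octMul_e_e 1 2)) 0
  have h12 : X 1 2 = X 0 3 := by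
    simpa [octMul_e_one_right] using congrFun (hX.col_eq_mul_e_one hfix (octMul_e_e 3 1)) 1
  have h65 : X 6 5 = -X 7 4 := by
    simpa [octMul_e_one_left] using congrFun (hX.col_eq_e_one_mul hfix (octMul_e_e 1 4)) 6
  have h47 : X 4 7 = -X 5 6 := by
    simpa [octMul_e_one_left] using congrFun (hX.col_eq_e_one_mul hfix (octMul_e_e 1 6)) 4
  rw [trace_tau1_mul]
  linear_combination
    (Complex.I / 2) * (h12 + h03) - Complex.I * h21 + (Complex.I / 2) * (h65 - h47)
end

section
/- The generator α̃_1 of the one-parameter group Ã_0 is orthogonal to the Lie algebra 𝔤_2(ℂ): for every derivation X of 𝕆_ℂ, one has Tr(α̃_1 X) = 0. (Since the trace form of the 8-dimensional spin representation is a nonzero multiple of the Killing form, this says that the Lie algebra 𝔞̃_0 = ℝα̃_1 lies in the Killing-orthogonal complement 𝔮 of 𝔤_2(ℂ) in 𝔰𝔭𝔦𝔫(7,ℂ).) -/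
open Matrix

lemma obm_0_0 : octBasisMul 0 0 = e 0 := rfl
lemma obm_0_1 : octBasisMul 0 1 = e 1 := rfl
lemma obm_0_2 : octBasisMul 0 2 = e 2 := rfl
lemma obm_0_3 : octBasisMul 0 3 = e 3 := rfl
lemma obm_0_4 : octBasisMul 0 4 = e 4 := rfl
lemma obm_0_5 : octBasisMul 0 5 = e 5 := rfl
lemma obm_0_6 : octBasisMul 0 6 = e 6 := rfl
lemma obm_0_7 : octBasisMul 0 7 = e 7 := rfl
lemma obm_1_0 : octBasisMul 1 0 = e 1 := rfl
lemma obm_1_1 : octBasisMul 1 1 = -(e 0) := rfl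
lemma obm_1_2 : octBasisMul 1 2 = e 3 := rfl
lemma obm_1_3 : octBasisMul 1 3 = -(e 2) := rfl
lemma obm_1_4 : octBasisMul 1 4 = e 5 := rfl
lemma obm_1_5 : octBasisMul 1 5 = -(e 4) := rfl
lemma obm_1_6 : octBasisMul 1 6 = e 7 := rfl
lemma obm_1_7 : octBasisMul 1 7 = -(e 6) := rfl
lemma obm_2_0 : octBasisMul 2 0 = e 2 := rfl
lemma obm_2_1 : octBasisMul 2 1 = -(e 3) := rfl
lemma obm_2_2 : octBasisMul 2 2 = -(e 0) := rfl
lemma obm_2_3 : octBasisMul 2 3 = e 1 := rfl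
lemma obm_2_4 : octBasisMul 2 4 = -(e 6) := rfl
lemma obm_2_5 : octBasisMul 2 5 = e 7 := rfl
lemma obm_2_6 : octBasisMul 2 6 = e 4 := rfl
lemma obm_2_7 : octBasisMul 2 7 = -(e 5) := rfl
lemma obm_3_0 : octBasisMul 3 0 = e 3 := rfl
lemma obm_3_1 : octBasisMul 3 1 = e 2 := rfl
lemma obm_3_2 : octBasisMul 3 2 = -(e 1) := rfl
lemma obm_3_3 : octBasisMul 3 3 = -(e 0) := rfl
lemma obm_3_4 : octBasisMul 3 4 = e 7 := rfl
lemma obm_3_5 : octBasisMul 3 5 = e 6 := rfl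
lemma obm_3_6 : octBasisMul 3 6 = -(e 5) := rfl
lemma obm_3_7 : octBasisMul 3 7 = -(e 4) := rfl
lemma obm_4_0 : octBasisMul 4 0 = e 4 := rfl
lemma obm_4_1 : octBasisMul 4 1 = -(e 5) := rfl
lemma obm_4_2 : octBasisMul 4 2 = e 6 := rfl
lemma obm_4_3 : octBasisMul 4 3 = -(e 7) := rfl
lemma obm_4_4 : octBasisMul 4 4 = -(e 0) := rfl
lemma obm_4_5 : octBasisMul 4 5 = e 1 := rfl
lemma obm_4_6 : octBasisMul 4 6 = -(e 2) := rfl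
lemma obm_4_7 : octBasisMul 4 7 = e 3 := rfl
lemma obm_5_0 : octBasisMul 5 0 = e 5 := rfl
lemma obm_5_1 : octBasisMul 5 1 = e 4 := rfl
lemma obm_5_2 : octBasisMul 5 2 = -(e 7) := rfl
lemma obm_5_3 : octBasisMul 5 3 = -(e 6) := rfl
lemma obm_5_4 : octBasisMul 5 4 = -(e 1) := rfl
lemma obm_5_5 : octBasisMul 5 5 = -(e 0) := rfl
lemma obm_5_6 : octBasisMul 5 6 = e 3 := rfl
lemma obm_5_7 : octBasisMul 5 7 = e 2 := rfl
lemma obm_6_0 : octBasisMul 6 0 = e 6 := rfl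
lemma obm_6_1 : octBasisMul 6 1 = -(e 7) := rfl
lemma obm_6_2 : octBasisMul 6 2 = -(e 4) := rfl
lemma obm_6_3 : octBasisMul 6 3 = e 5 := rfl
lemma obm_6_4 : octBasisMul 6 4 = e 2 := rfl
lemma obm_6_5 : octBasisMul 6 5 = -(e 3) := rfl
lemma obm_6_6 : octBasisMul 6 6 = -(e 0) := rfl
lemma obm_6_7 : octBasisMul 6 7 = e 1 := rfl
lemma obm_7_0 : octBasisMul 7 0 = e 7 := rfl
lemma obm_7_1 : octBasisMul 7 1 = e 6 := rfl
lemma obm_7_2 : octBasisMul 7 2 = e 5 := rfl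
lemma obm_7_3 : octBasisMul 7 3 = e 4 := rfl
lemma obm_7_4 : octBasisMul 7 4 = -(e 3) := rfl
lemma obm_7_5 : octBasisMul 7 5 = -(e 2) := rfl
lemma obm_7_6 : octBasisMul 7 6 = -(e 1) := rfl
lemma obm_7_7 : octBasisMul 7 7 = -(e 0) := rfl


lemma octMul_left_e (x : Fin 8 → ℂ) (b : Fin 8) :
    octMul x (e b) = ∑ i, x i • octBasisMul i b := by
  unfold octMul
  refine Finset.sum_congr rfl fun i _ => ?_
  simp [e, Pi.single_apply, mul_ite, mul_one, mul_zero, ite_smul, zero_smul]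

lemma octMul_right_e (a : Fin 8) (y : Fin 8 → ℂ) :
    octMul (e a) y = ∑ j, y j • octBasisMul a j := by
  unfold octMul
  rw [Finset.sum_comm]
  refine Finset.sum_congr rfl fun j _ => ?_
  simp [e, Pi.single_apply, ite_mul, one_mul, zero_mul, ite_smul, zero_smul]

lemma mulVec_e_s13 (X : Matrix (Fin 8) (Fin 8) ℂ) (a : Fin 8) :
    X.mulVec (e a) = fun i => X i a := by
  funext i
  simp [e, Matrix.mulVec, dotProduct, Pi.single_apply, mul_ite]

lemma acol0 (i : Fin 8) : alphatil1 i 0 = (Complex.I • e 1) i := rfl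
lemma acol1 (i : Fin 8) : alphatil1 i 1 = ((-Complex.I) • e 0) i := rfl
lemma acol2 (i : Fin 8) : alphatil1 i 2 = ((-(Complex.I/3)) • e 3) i := rfl
lemma acol3 (i : Fin 8) : alphatil1 i 3 = ((Complex.I/3) • e 2) i := rfl
lemma acol4 (i : Fin 8) : alphatil1 i 4 = ((-(Complex.I/3)) • e 5) i := rfl
lemma acol5 (i : Fin 8) : alphatil1 i 5 = ((Complex.I/3) • e 4) i := rfl
lemma acol6 (i : Fin 8) : alphatil1 i 6 = ((-(Complex.I/3)) • e 7) i := rfl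
lemma acol7 (i : Fin 8) : alphatil1 i 7 = ((Complex.I/3) • e 6) i := rfl

set_option maxHeartbeats 3200000 in
/-- **Lemma `lem:a0-spin-q`.** The generator `α̃₁` of the one-parameter group `Ã₀` is
orthogonal to the Lie algebra `𝔤₂(ℂ)`: for every derivation `X` of `𝕆_ℂ`,
`Tr(α̃₁ X) = 0`.  (Since the trace form of the 8-dimensional spin representation is a
nonzero multiple of the Killing form, this says that `𝔞̃₀ = ℝ α̃₁` lies in the
Killing-orthogonal complement `𝔮` of `𝔤₂(ℂ)` in `𝔰𝔭𝔦𝔫(7,ℂ)`.) -/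
theorem stmt13 (X : Matrix (Fin 8) (Fin 8) ℂ)
    (hder : ∀ x y, X.mulVec (octMul x y)
      = octMul (X.mulVec x) y + octMul x (X.mulVec y)) :
    Matrix.trace (alphatil1 * X) = 0 := by
  have key : ∀ a b c : Fin 8, (X.mulVec (octBasisMul a b)) c
      = (∑ i, X i a * octBasisMul i b c) + (∑ j, X j b * octBasisMul a j c) := by
    intro a b c
    have hab : octMul (e a) (e b) = octBasisMul a b := by
      rw [octMul_left_e]; simp [e, Pi.single_apply, ite_smul, zero_smul]
    have h := congrFun (hder (e a) (e b)) c
    rw [hab, mulVec_e_s13 X a, mulVec_e_s13 X b, octMul_left_e, octMul_right_e] at h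
    simpa [Finset.sum_apply, Pi.smul_apply, smul_eq_mul] using h
  have h1 := key 0 0 1
  have h2 := key 1 2 2
  have h3 := key 1 4 4
  have h4 := key 1 6 6
  have h5 := key 2 4 7
  simp only [Fin.sum_univ_eight] at h1 h2 h3 h4 h5
  simp only [obm_0_0, obm_0_1, obm_0_2, obm_0_3, obm_0_4, obm_0_5, obm_0_6, obm_0_7, obm_1_0, obm_1_1, obm_1_2, obm_1_3, obm_1_4, obm_1_5, obm_1_6, obm_1_7, obm_2_0, obm_2_1, obm_2_2, obm_2_3, obm_2_4, obm_2_5, obm_2_6, obm_2_7, obm_3_0, obm_3_1, obm_3_2, obm_3_3, obm_3_4, obm_3_5, obm_3_6, obm_3_7, obm_4_0, obm_4_1, obm_4_2, obm_4_3, obm_4_4, obm_4_5, obm_4_6, obm_4_7, obm_5_0, obm_5_1, obm_5_2, obm_5_3, obm_5_4, obm_5_5, obm_5_6, obm_5_7, obm_6_0, obm_6_1, obm_6_2, obm_6_3, obm_6_4, obm_6_5, obm_6_6, obm_6_7, obm_7_0, obm_7_1, obm_7_2, obm_7_3, obm_7_4, obm_7_5, obm_7_6, obm_7_7] at h1 h2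 h3 h4 h5
  simp only [Matrix.mulVec, dotProduct, Fin.sum_univ_eight, e,
    Pi.single_apply, Pi.neg_apply, Pi.zero_apply] at h1 h2 h3 h4 h5
  simp (config := { decide := true }) only [reduceIte, neg_zero, add_zero, zero_add, neg_neg] at h1 h2 h3 h4 h5
  simp only [Matrix.trace, Matrix.diag, Matrix.mul_apply, Fin.sum_univ_eight,
    acol0, acol1, acol2, acol3, acol4, acol5, acol6, acol7,
    Pi.smul_apply, Pi.neg_apply, smul_eq_mul]
  simp (config := { decide := true }) only [e, Pi.single_apply, reduceIte,
    mul_zero, mul_one, zero_mul, neg_zero, add_zero, zero_add, neg_mul, mul_neg]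
  linear_combination (Complex.I) * h1 - (Complex.I/3) * h2 - (Complex.I/3) * h3
    - (Complex.I/3) * h4 - (2*Complex.I/3) * h5
end
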